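/- Let f : I → ℝ where I ⊆ ℝ is an interval, and suppose f''' is absolutely continuous on the interior I° of I. Let a, b ∈ I° with a < b and f''' integrable on [a,b]. Then ∫_a^b f(x) dx − ((b−a)/6)·[f(a) + 4·f((a+b)/2) + f(b)] = (b−a)^4 · ∫_0^1 p(t)·f'''(t·a + (1−t)·b) dt, where p(t) = (1/6)·t²·(t − 1/2) for t ∈ [0, 1/2] and p(t) = (1/6)·(t−1)²·(t − 1/2) for t ∈ (1/2, 1]. -/

import Mathlib

/-!
Split `[a, b]` at its midpoint `m`. On each half the Peano kernel of Simpson's rule is the cubic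
`(x - e) ^ 2 * (m - x) / 6`, where `e` is the endpoint of that half: its third derivative is `-1`,
and it vanishes doubly at `e` and simply at `m`. Integrating by parts three times on each half
turns `∫ K f'''` into `∫ f` minus the Simpson sum; the `f' m` boundary terms of the two halves
cancel. The substitution `x = t a + (1 - t) b` turns the kernel into `(b - a) ^ 3 * p t`.
-/

open MeasureTheory Real Set

/-- A real function `g` is absolutely continuous on a set `s`. -/
def AbsolutelyContinuousOnReal (g : ℝ → ℝ) (s : Set ℝ) : Prop :=
  ∀ ε > (0 : ℝ), ∃ δ > (0 : ℝ), ∀ (n : ℕ) (u v : Fin n → ℝ),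
    (∀ i, u i < v i ∧ Set.Icc (u i) (v i) ⊆ s) →
    (Pairwise fun i j => Disjoint (Set.Ioo (u i) (v i)) (Set.Ioo (u j) (v j))) →
    (∑ i, (v i - u i)) < δ → (∑ i, |g (v i) - g (u i)|) < ε

/-- The Simpson kernel `p(t)` from the paper. -/
noncomputable def simpsonKernel (t : ℝ) : ℝ :=
  if t ≤ 1 / 2 then (1 / 6) * t ^ 2 * (t - 1 / 2) else (1 / 6) * (t - 1) ^ 2 * (t - 1 / 2)

open intervalIntegral

theorem integral_mul_third_deriv_eq {u u₁ u₂ u₃ f f₁ f₂ f₃ : ℝ → ℝ} {p q : ℝ}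
    (hu : ∀ x ∈ uIcc p q, HasDerivAt u (u₁ x) x)
    (hu₁ : ∀ x ∈ uIcc p q, HasDerivAt u₁ (u₂ x) x)
    (hu₂ : ∀ x ∈ uIcc p q, HasDerivAt u₂ (u₃ x) x)
    (hf : ∀ x ∈ uIcc p q, HasDerivAt f (f₁ x) x)
    (hf₁ : ∀ x ∈ uIcc p q, HasDerivAt f₁ (f₂ x) x)
    (hf₂ : ∀ x ∈ uIcc p q, HasDerivAt f₂ (f₃ x) x)
    (hu₃ : IntervalIntegrable u₃ volume p q) (hf₃ : IntervalIntegrable f₃ volume p q) :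
    ∫ x in p..q, u x * f₃ x =
      (u q * f₂ q - u p * f₂ p) - (u₁ q * f₁ q - u₁ p * f₁ p) + (u₂ q * f q - u₂ p * f p)
        - ∫ x in p..q, u₃ x * f x := by
  rw [integral_mul_deriv_eq_deriv_mul hu hf₂
      ((HasDerivAt.continuousOn hu₁).intervalIntegrable) hf₃,
    integral_mul_deriv_eq_deriv_mul hu₁ hf₁
      ((HasDerivAt.continuousOn hu₂).intervalIntegrable)
      ((HasDerivAt.continuousOn hf₂).intervalIntegrable),
    integral_mul_deriv_eq_deriv_mul hu₂ hf hu₃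
      ((HasDerivAt.continuousOn hf₁).intervalIntegrable)]
  ring

theorem sub_mul_integral_comp_convexComb (g : ℝ → ℝ) (a b : ℝ) :
    (b - a) * ∫ t in (0 : ℝ)..1, g (t * a + (1 - t) * b) = ∫ x in a..b, g x := by
  have h := smul_integral_comp_mul_add (f := g) (a := 0) (b := 1) (a - b) b
  simp only [mul_zero, zero_add, mul_one, sub_add_cancel, smul_eq_mul] at h
  have h_comp : (fun t => g (t * a + (1 - t) * b)) = fun t => g ((a - b) * t + b) :=
    funext fun t => by ring_nf
  rw [integral_symm b, ← h, h_comp]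
  ring

theorem integral_cubic_mul_third_deriv {f f₁ f₂ f₃ : ℝ → ℝ} {r m : ℝ}
    (hf : ∀ x ∈ uIcc r m, HasDerivAt f (f₁ x) x)
    (hf₁ : ∀ x ∈ uIcc r m, HasDerivAt f₁ (f₂ x) x)
    (hf₂ : ∀ x ∈ uIcc r m, HasDerivAt f₂ (f₃ x) x)
    (hf₃ : IntervalIntegrable f₃ volume r m) :
    ∫ x in r..m, (x - r) ^ 2 * (m - x) / 6 * f₃ x =
      (∫ x in r..m, f x) - (m - r) / 3 * (f r + 2 * f m) + (m - r) ^ 2 / 6 * f₁ m := by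
  have hu (x : ℝ) : HasDerivAt (fun x => (x - r) ^ 2 * (m - x) / 6)
      ((2 * (x - r) * (m - x) - (x - r) ^ 2) / 6) x :=
    ((((hasDerivAt_id x).sub_const r).pow 2).mul
      ((hasDerivAt_id x).const_sub m)).div_const 6 |>.congr_deriv (by simp; ring)
  have hu₁ (x : ℝ) : HasDerivAt (fun x => (2 * (x - r) * (m - x) - (x - r) ^ 2) / 6)
      ((m - x - 2 * (x - r)) / 3) x :=
    ((((hasDerivAt_id x).sub_const r).const_mul 2).mul ((hasDerivAt_id x).const_sub m)
      |>.sub (((hasDerivAt_id x).sub_const r).pow 2)).div_const 6 |>.congr_deriv (by simp; ring)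
  have hu₂ (x : ℝ) : HasDerivAt (fun x => (m - x - 2 * (x - r)) / 3) (-1) x :=
    (((hasDerivAt_id x).const_sub m).sub
      (((hasDerivAt_id x).sub_const r).const_mul 2)).div_const 3 |>.congr_deriv (by simp; ring)
  rw [integral_mul_third_deriv_eq (fun x _ => hu x) (fun x _ => hu₁ x) (fun x _ => hu₂ x)
    hf hf₁ hf₂ intervalIntegrable_const hf₃]
  simp only [neg_one_mul, intervalIntegral.integral_neg]
  ring

noncomputable def simpsonPeanoKernel (a b x : ℝ) : ℝ :=
  if x ≤ (a + b) / 2 then (x - a) ^ 2 * ((a + b) / 2 - x) / 6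
  else (x - b) ^ 2 * ((a + b) / 2 - x) / 6

theorem continuous_simpsonPeanoKernel (a b : ℝ) : Continuous (simpsonPeanoKernel a b) :=
  Continuous.if_le (by fun_prop) (by fun_prop) continuous_id continuous_const
    fun x hx => by simp [hx]

theorem simpsonPeanoKernel_convexComb {a b : ℝ} (hab : a ≤ b) (t : ℝ) :
    simpsonPeanoKernel a b (t * a + (1 - t) * b) = (b - a) ^ 3 * simpsonKernel t := by
  have hmid : (a + b) / 2 - (t * a + (1 - t) * b) = (t - 1 / 2) * (b - a) := by ring
  unfold simpsonPeanoKernel simpsonKernel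
  split_ifs with hx ht ht
  · have h0 : (t - 1 / 2) * (b - a) = 0 := by nlinarith
    rw [hmid, h0]
    linear_combination (-(b - a) ^ 2 * t ^ 2 / 6) * h0
  · rw [hmid]; ring
  · rw [hmid]; ring
  · nlinarith

theorem integral_simpsonPeanoKernel_mul {F : ℝ → ℝ} {a b : ℝ} (hab : a ≤ b)
    (hF : IntervalIntegrable F volume a b) :
    ∫ x in a..b, simpsonPeanoKernel a b x * F x =
      (∫ x in a..(a + b) / 2, (x - a) ^ 2 * ((a + b) / 2 - x) / 6 * F x)
        - ∫ x in b..(a + b) / 2, (x - b) ^ 2 * ((a + b) / 2 - x) / 6 * F x := by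
  have hKF := hF.continuousOn_mul (continuous_simpsonPeanoKernel a b).continuousOn
  have hm : (a + b) / 2 ∈ uIcc a b := by rw [uIcc_of_le hab]; constructor <;> linarith
  have h_left : EqOn (fun x => simpsonPeanoKernel a b x * F x)
      (fun x => (x - a) ^ 2 * ((a + b) / 2 - x) / 6 * F x) (uIcc a ((a + b) / 2)) := by
    intro x hx
    rw [uIcc_of_le (by linarith)] at hx
    simp [simpsonPeanoKernel, hx.2]
  have h_right : EqOn (fun x => simpsonPeanoKernel a b x * F x)
      (fun x => (x - b) ^ 2 * ((a + b) / 2 - x) / 6 * F x) (uIcc b ((a + b) / 2)) := by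
    intro x hx
    rw [uIcc_of_ge (by linarith)] at hx
    rcases hx.1.eq_or_lt with hxm | hxm
    · simp [simpsonPeanoKernel, ← hxm]
    · simp [simpsonPeanoKernel, not_le.2 hxm]
  rw [← integral_add_adjacent_intervals (hKF.mono_set (uIcc_subset_uIcc left_mem_uIcc hm))
    (hKF.mono_set (uIcc_subset_uIcc hm right_mem_uIcc)), integral_congr h_left,
    integral_symm b, integral_congr h_right, sub_eq_add_neg]

theorem integral_sub_simpson_eq_integral_simpsonPeanoKernel_mul {f f₁ f₂ f₃ : ℝ → ℝ} {a b : ℝ}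
    (hab : a ≤ b)
    (hf : ∀ x ∈ uIcc a b, HasDerivAt f (f₁ x) x)
    (hf₁ : ∀ x ∈ uIcc a b, HasDerivAt f₁ (f₂ x) x)
    (hf₂ : ∀ x ∈ uIcc a b, HasDerivAt f₂ (f₃ x) x)
    (hf₃ : IntervalIntegrable f₃ volume a b) :
    (∫ x in a..b, f x) - (b - a) / 6 * (f a + 4 * f ((a + b) / 2) + f b) =
      ∫ x in a..b, simpsonPeanoKernel a b x * f₃ x := by
  have hm : (a + b) / 2 ∈ uIcc a b := by rw [uIcc_of_le hab]; constructor <;> linarith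
  have h_left : uIcc a ((a + b) / 2) ⊆ uIcc a b := uIcc_subset_uIcc left_mem_uIcc hm
  have h_right : uIcc b ((a + b) / 2) ⊆ uIcc a b := uIcc_subset_uIcc right_mem_uIcc hm
  have hfi := (HasDerivAt.continuousOn hf).intervalIntegrable (μ := volume)
  rw [integral_simpsonPeanoKernel_mul hab hf₃,
    integral_cubic_mul_third_deriv (fun x hx => hf x (h_left hx)) (fun x hx => hf₁ x (h_left hx))
      (fun x hx => hf₂ x (h_left hx)) (hf₃.mono_set h_left),
    integral_cubic_mul_third_deriv (fun x hx => hf x (h_right hx))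
      (fun x hx => hf₁ x (h_right hx)) (fun x hx => hf₂ x (h_right hx)) (hf₃.mono_set h_right),
    ← integral_add_adjacent_intervals (hfi.mono_set h_left) (hfi.mono_set h_right).symm,
    integral_symm b]
  ring

theorem simpson_identity_general (I : Set ℝ) (hI : I.OrdConnected) (f : ℝ → ℝ)
    (a b : ℝ) (ha : a ∈ interior I) (hb : b ∈ interior I) (hab : a < b)
    (hd1 : ∀ x ∈ interior I, DifferentiableAt ℝ f x)
    (hd2 : ∀ x ∈ interior I, DifferentiableAt ℝ (deriv f) x)
    (hd3 : ∀ x ∈ interior I, DifferentiableAt ℝ (deriv (deriv f)) x)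
    (hint : IntegrableOn (deriv (deriv (deriv f))) (Set.Icc a b)) :
    (∫ x in a..b, f x) - (b - a) / 6 * (f a + 4 * f ((a + b) / 2) + f b) =
      (b - a) ^ 4 *
        ∫ t in (0 : ℝ)..1,
          simpsonKernel t * deriv (deriv (deriv f)) (t * a + (1 - t) * b) := by
  have hsub : uIcc a b ⊆ interior I := uIcc_of_le hab.le ▸ hI.interior.out ha hb
  rw [integral_sub_simpson_eq_integral_simpsonPeanoKernel_mul hab.le
      (fun x hx => (hd1 x (hsub hx)).hasDerivAt) (fun x hx => (hd2 x (hsub hx)).hasDerivAt)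
      (fun x hx => (hd3 x (hsub hx)).hasDerivAt)
      ((intervalIntegrable_iff_integrableOn_Icc_of_le hab.le).2 hint),
    ← sub_mul_integral_comp_convexComb, pow_succ', mul_assoc]
  congr 1
  rw [← intervalIntegral.integral_const_mul]
  refine integral_congr fun t _ => ?_
  simp only [simpsonPeanoKernel_convexComb hab.le, mul_assoc]

theorem simpson_identity (I : Set ℝ) (hI : I.OrdConnected) (f : ℝ → ℝ)
    (a b : ℝ) (ha : a ∈ interior I) (hb : b ∈ interior I) (hab : a < b)
    (hd1 : ∀ x ∈ interior I, DifferentiableAt ℝ f x)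
    (hd2 : ∀ x ∈ interior I, DifferentiableAt ℝ (deriv f) x)
    (hd3 : ∀ x ∈ interior I, DifferentiableAt ℝ (deriv (deriv f)) x)
    (hac : AbsolutelyContinuousOnReal (deriv (deriv (deriv f))) (interior I))
    (hint : IntegrableOn (deriv (deriv (deriv f))) (Set.Icc a b)) :
    (∫ x in a..b, f x) - (b - a) / 6 * (f a + 4 * f ((a + b) / 2) + f b) =
      (b - a) ^ 4 *
        ∫ t in (0 : ℝ)..1,
          simpsonKernel t * deriv (deriv (deriv f)) (t * a + (1 - t) * b) :=
  simpson_identity_general I hI f a b ha hb hab hd1 hd2 hd3 hint
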